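/- arXiv:2404.01118 — 3 statements merged into one kernel-verified Lean document; each statement's English description precedes it below -/
import Mathlib

section
/- Let $(a_n)_{n\ge 1}$ be a sequence of real numbers with $1 \le a_n$, $a_n$ nondecreasing, and $a_n \to \infty$. Then for every $\lambda > 1$ there exists a strictly increasing sequence of indices $(n_k)_{k\ge 1}$ with $n_k \to \infty$ such that $\lambda a_{n_k} \le a_{n_{k+1}} \le \lambda^3 a_{n_k+1}$ for all $k$. -/
/-!
Call `r` a jump if `λ a r < a (r + 1)`, and say that `m` has no early jump if no jump occurs at
an index `i > m` with `a i < λ a m`. Every jump has no early jump, so every index `p` is followed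
by some `q ≥ p` without early jump and with `a q ≤ λ a p`: either `p` itself or the offending jump.
From such an `m`, the first index `p` with `λ a m ≤ a p` satisfies `a p ≤ λ² a (m + 1)`, because
the step into `p` is not a jump; passing from `p` to a suitable `q` costs one more factor `λ`.
Iterating gives the subsequence.
-/

open Filter

theorem exists_strictMono_chain {α : Type*} [Preorder α] {P : α → Prop} {R : α → α → Prop}
    {x₀ : α} (h₀ : P x₀) (hstep : ∀ x, P x → ∃ y, x < y ∧ P y ∧ R x y) :
    ∃ n : ℕ → α, StrictMono n ∧ ∀ k, R (n k) (n (k + 1)) := by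
  choose next hlt hP hR using hstep
  let seq : ℕ → {x // P x} := fun k => Nat.rec ⟨x₀, h₀⟩ (fun _ x => ⟨next x.1 x.2, hP x.1 x.2⟩) k
  exact ⟨fun k => (seq k).1, strictMono_nat_of_lt_succ fun k => hlt _ _, fun k => hR _ _⟩

namespace Wittmann

variable {a : ℕ → ℝ} {lam : ℝ}

def NoEarlyJump (a : ℕ → ℝ) (lam : ℝ) (m : ℕ) : Prop :=
  ∀ i, m < i → a i < lam * a m → a (i + 1) ≤ lam * a i

theorem noEarlyJump_of_jump (hmono : Monotone a) {r : ℕ} (hjump : lam * a r < a (r + 1)) :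
    NoEarlyJump a lam r := fun _ hri hi =>
  absurd (hjump.trans_le (hmono hri)) hi.not_gt

theorem exists_noEarlyJump_le (hmono : Monotone a) (hlam : 1 ≤ lam) {p : ℕ} (hp : 0 ≤ a p) :
    ∃ q, p ≤ q ∧ NoEarlyJump a lam q ∧ a q ≤ lam * a p := by
  by_cases hgood : NoEarlyJump a lam p
  · exact ⟨p, le_rfl, hgood, le_mul_of_one_le_left hp hlam⟩
  · obtain ⟨r, hpr, hr, hjump⟩ : ∃ r, p < r ∧ a r < lam * a p ∧ lam * a r < a (r + 1) := by
      simpa [NoEarlyJump] using hgood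
    exact ⟨r, hpr.le, noEarlyJump_of_jump hmono hjump, hr.le⟩

theorem exists_first_passage (hmono : Monotone a) (htop : Tendsto a atTop atTop) (hlam : 1 < lam)
    {m : ℕ} (hm : 0 < a m) (hgood : NoEarlyJump a lam m) :
    ∃ p, m < p ∧ lam * a m ≤ a p ∧ a p ≤ lam ^ 2 * a (m + 1) := by
  have hex : ∃ p, lam * a m ≤ a p := (htop.eventually_ge_atTop _).exists
  obtain ⟨p, hp, hmin⟩ : ∃ p, lam * a m ≤ a p ∧ ∀ j < p, a j < lam * a m :=
    ⟨Nat.find hex, Nat.find_spec hex, fun j hj => not_le.mp (Nat.find_min hex hj)⟩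
  have hmp : m < p := by
    by_contra! hpm
    exact (lt_mul_of_one_lt_left hm hlam).not_ge (hp.trans (hmono hpm))
  refine ⟨p, hmp, hp, ?_⟩
  obtain ⟨i, rfl⟩ : ∃ i, p = i + 1 := ⟨p - 1, by omega⟩
  have hi : a i < lam * a m := hmin i i.lt_succ_self
  obtain rfl | hmi := (Nat.lt_succ_iff.mp hmp).eq_or_lt
  · exact le_mul_of_one_le_left (hm.le.trans (hmono m.le_succ)) (one_le_pow₀ hlam.le)
  · calc a (i + 1) ≤ lam * a i := hgood i hmi hi
      _ ≤ lam * (lam * a m) := by gcongr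
      _ ≤ lam ^ 2 * a (m + 1) := by rw [sq, mul_assoc]; gcongr; exact hmono m.le_succ

theorem exists_next (hmono : Monotone a) (htop : Tendsto a atTop atTop) (hpos : ∀ n, 0 < a n)
    (hlam : 1 < lam) {m : ℕ} (hgood : NoEarlyJump a lam m) :
    ∃ m', m < m' ∧ NoEarlyJump a lam m' ∧ lam * a m ≤ a m' ∧ a m' ≤ lam ^ 3 * a (m + 1) := by
  obtain ⟨p, hmp, hlow, hup⟩ := exists_first_passage hmono htop hlam (hpos m) hgood
  obtain ⟨q, hpq, hq, hqp⟩ := exists_noEarlyJump_le hmono hlam.le (hpos p).le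
  refine ⟨q, hmp.trans_le hpq, hq, hlow.trans (hmono hpq), ?_⟩
  calc a q ≤ lam * a p := hqp
    _ ≤ lam * (lam ^ 2 * a (m + 1)) := by gcongr
    _ = lam ^ 3 * a (m + 1) := by ring

end Wittmann

open Wittmann in
theorem wittmann_subsequence (a : ℕ → ℝ) (h1 : ∀ n, 1 ≤ a n) (hmono : Monotone a)
    (htop : Tendsto a atTop atTop) :
    ∀ lam : ℝ, 1 < lam →
      ∃ n : ℕ → ℕ, StrictMono n ∧ Tendsto n atTop atTop ∧
        ∀ k : ℕ, lam * a (n k) ≤ a (n (k + 1)) ∧ a (n (k + 1)) ≤ lam ^ 3 * a (n k + 1) := by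
  intro lam hlam
  have hpos : ∀ n, 0 < a n := fun n => one_pos.trans_le (h1 n)
  obtain ⟨m₀, -, hm₀, -⟩ := exists_noEarlyJump_le hmono hlam.le (hpos 0).le
  obtain ⟨n, hn, hstep⟩ := exists_strictMono_chain hm₀ fun m hm =>
    exists_next hmono htop hpos hlam hm
  exact ⟨n, hn, hn.tendsto_atTop, hstep⟩
end

section
/- Let $(\Omega, \mathcal{H}, \mathbb{E})$ be a sub-linear expectation space, i.e., $\mathcal{H}$ is a linear space of functions on $\Omega$ closed under the required operations and $\mathbb{E} : \mathcal{H} \to \overline{\mathbb{R}}$ is monotone, constant-preserving, sub-additive and positively homogeneous. For $X \in \mathcal{H}$ and $c > 0$ write $X^{(c)} = (-c) \vee X \wedge c$, and let $\mathcal{H}_1 = \{X \in \mathcal{H} : \lim_{c,d\to\infty} \mathbb{E}[(|X| \wedge d - c)^+] = 0\}$ and $\breve{\mathbb{E}}[X] = \lim_{c\to\infty} \mathbb{E}[X^{(c)}]$ for $X \in \mathcal{H}_1$. If $X, Y \in \mathcal{H}_1$ and $Y$ is independent of $X$ under $\mathbb{E}$, then $\breve{\mathbb{E}}[X+Y] =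 \breve{\mathbb{E}}[X] + \breve{\mathbb{E}}[Y]$. -/
open Filter MeasureTheory

noncomputable section

/-- The class `C_{l,Lip}` of local Lipschitz functions with polynomial growth. -/
def ClLip {n : ℕ} (φ : (Fin n → ℝ) → ℝ) : Prop :=
  ∃ C : ℝ, 0 < C ∧ ∃ m : ℕ, ∀ x y : Fin n → ℝ,
    |φ x - φ y| ≤ C * (1 + ‖x‖ ^ m + ‖y‖ ^ m) * ‖x - y‖

/-- A sub-linear expectation space `(Ω, H, E)` in the sense of Peng. -/
structure SLE (Ω : Type*) where
  H : Set (Ω → ℝ)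
  E : (Ω → ℝ) → ℝ
  const_mem : ∀ c : ℝ, (fun _ => c) ∈ H
  comp_mem : ∀ (n : ℕ) (φ : (Fin n → ℝ) → ℝ), ClLip φ →
    ∀ X : Fin n → Ω → ℝ, (∀ i, X i ∈ H) → (fun ω => φ (fun i => X i ω)) ∈ H
  mono : ∀ X Y, X ∈ H → Y ∈ H → (∀ ω, X ω ≤ Y ω) → E X ≤ E Y
  isConst : ∀ c : ℝ, E (fun _ => c) = c
  subadd : ∀ X Y, X ∈ H → Y ∈ H → E (fun ω => X ω + Y ω) ≤ E X + E Y
  poshom : ∀ c : ℝ, 0 < c → ∀ X, X ∈ H → E (fun ω => c * X ω) = c * E X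

variable {Ω : Type*}

/-- The conjugate (lower) expectation. -/
def SLE.eps (S : SLE Ω) (X : Ω → ℝ) : ℝ := -S.E (fun ω => -X ω)

/-- `Y` (a `q`-vector) is independent of `X` (a `p`-vector) in Peng's sense. -/
def IndepVec (S : SLE Ω) {p q : ℕ} (X : Fin p → Ω → ℝ) (Y : Fin q → Ω → ℝ) : Prop :=
  ∀ φ : (Fin p → ℝ) → (Fin q → ℝ) → ℝ,
    (∃ K : NNReal, LipschitzWith K (Function.uncurry φ)) →
    (∃ M : ℝ, ∀ x y, |φ x y| ≤ M) →
    S.E (fun ω => φ (fun i => X i ω) (fun j => Y j ω)) =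
      S.E (fun ω => S.E (fun ω' => φ (fun i => X i ω) (fun j => Y j ω')))

/-- A sequence is independent if `X_{i+1}` is independent of `(X_0, …, X_i)`. -/
def IndepSeq (S : SLE Ω) (X : ℕ → Ω → ℝ) : Prop :=
  ∀ i : ℕ, IndepVec S (fun j : Fin (i + 1) => X j.val) (fun _ : Fin 1 => X (i + 1))

/-- The upper capacity `V̂` generated by the sub-linear expectation. -/
def hatV (S : SLE Ω) (A : Set Ω) : ℝ :=
  sInf {r | ∃ ξ ∈ S.H, (∀ ω, Set.indicator A (fun _ => (1 : ℝ)) ω ≤ ξ ω) ∧ S.E ξ = r}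

/-- The countably sub-additive extension `V*` of `V̂`. -/
def Vstar (S : SLE Ω) (A : Set Ω) : ℝ :=
  sInf {r | ∃ B : ℕ → Set Ω, (A ⊆ ⋃ n, B n) ∧
    Summable (fun n => hatV S (B n)) ∧ r = ∑' n, hatV S (B n)}

/-- Truncation `X^{(c)} = (-c) ∨ X ∧ c`. -/
def trunc (c : ℝ) (X : Ω → ℝ) : Ω → ℝ := fun ω => max (-c) (min (X ω) c)

/-- Membership in `H₁ = {X ∈ H : lim_{c,d→∞} E[(|X| ∧ d - c)⁺] = 0}`. -/
def memH1 (S : SLE Ω) (X : Ω → ℝ) : Prop :=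
  X ∈ S.H ∧
    Tendsto (fun cd : ℝ × ℝ => S.E (fun ω => max (min |X ω| cd.2 - cd.1) 0))
      (atTop ×ˢ atTop) (nhds 0)

/-- Two real random variables are identically distributed (Peng's sense). -/
def IdentDist1 (S : SLE Ω) (A B : Ω → ℝ) : Prop :=
  ∀ φ : ℝ → ℝ, (∃ K : NNReal, LipschitzWith K φ) → (∃ M : ℝ, ∀ x, |φ x| ≤ M) →
    S.E (fun ω => φ (A ω)) = S.E (fun ω => φ (B ω))

/-- `m`-dependence: `(X_{n+m+1}, …, X_{n+j})` is independent of `(X_1, …, X_n)`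
(indices here are 0-based: `X 0` plays the role of `X_1`). -/
def MDep (S : SLE Ω) (m : ℕ) (X : ℕ → Ω → ℝ) : Prop :=
  ∀ n : ℕ, 1 ≤ n → ∀ j : ℕ, m + 1 ≤ j →
    IndepVec S (fun i : Fin n => X i.val) (fun i : Fin (j - m) => X (n + m + i.val))

/-- Linear stationarity: `X_1 + ⋯ + X_n ≐ X_{1+p} + ⋯ + X_{n+p}`. -/
def LinStat (S : SLE Ω) (X : ℕ → Ω → ℝ) : Prop :=
  ∀ n : ℕ, 1 ≤ n → ∀ p : ℕ,
    IdentDist1 S (fun ω => ∑ i ∈ Finset.range n, X i ω)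
      (fun ω => ∑ i ∈ Finset.range n, X (p + i) ω)

/-- Condition (CC): `E` is represented by a countable-dimensionally weakly
compact family `P` of probability measures. -/
def CC [MeasurableSpace Ω] (S : SLE Ω) (P : Set (Measure Ω)) : Prop :=
  P.Nonempty ∧ (∀ p ∈ P, IsProbabilityMeasure p) ∧
  (∀ X ∈ S.H, (∃ M : ℝ, ∀ ω, |X ω| ≤ M) → S.E X = ⨆ p ∈ P, ∫ ω, X ω ∂p) ∧
  (∀ Y : ℕ → Ω → ℝ, (∀ n, Y n ∈ S.H ∧ ∃ M : ℝ, ∀ ω, |Y n ω| ≤ M) →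
    ∀ p : ℕ → Measure Ω, (∀ n, p n ∈ P) →
      ∃ k : ℕ → ℕ, StrictMono k ∧ ∃ Q ∈ P,
        ∀ (d : ℕ) (φ : (Fin d → ℝ) → ℝ),
          (∃ K : NNReal, LipschitzWith K φ) → (∃ M : ℝ, ∀ x, |φ x| ≤ M) →
          Tendsto (fun j => ∫ ω, φ (fun i : Fin d => Y i.val ω) ∂(p (k j))) atTop
            (nhds (∫ ω, φ (fun i : Fin d => Y i.val ω) ∂Q)))


/-- `Y` is independent of `X` in Peng's sense (scalar case). -/
def IndepPair (S : SLE Ω) (X Y : Ω → ℝ) : Prop :=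
  ∀ φ : ℝ → ℝ → ℝ,
    (∃ K : NNReal, LipschitzWith K (Function.uncurry φ)) →
    (∃ M : ℝ, ∀ x y, |φ x y| ≤ M) →
    S.E (fun ω => φ (X ω) (Y ω)) = S.E (fun ω => S.E (fun ω' => φ (X ω) (Y ω')))

/-!
Truncating at level `b`, the defect `(X+Y)^{(b)} - (X^{(b)} + Y^{(b)})` vanishes where
`|X|, |Y| ≤ b/2` and is at most `3b` everywhere, so it is bounded by
`2 ((|X| ∧ 2b - b/2)⁺ + (|Y| ∧ 2b - b/2)⁺)`, whose expectation tends to `0` for `X, Y ∈ H₁`.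
For the bounded Lipschitz functions `X^{(b)}, Y^{(b)}` of independent variables,
`E[X^{(b)} + Y^{(b)}] = E[X^{(b)}] + E[Y^{(b)}]`. A similar pointwise estimate shows that
`c ↦ E[X^{(c)}]` is Cauchy, so all three limits exist.
-/

/-- `trunc b X` is definitionally `clamp b ∘ X`. -/
def clamp (b u : ℝ) : ℝ := max (-b) (min u b)

/-- The integrand in `memH1`. -/
def tail (c d u : ℝ) : ℝ := max (min |u| d - c) 0

section Clamp

variable {b c : ℝ}

theorem lipschitzWith_clamp (b : ℝ) : LipschitzWith 1 (clamp b) :=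
  (LipschitzWith.id.min_const b).const_max (-b)

theorem lipschitzWith_tail (c d : ℝ) : LipschitzWith 1 (tail c d) := by
  have h :=
    (((lipschitzWith_one_norm (E := ℝ)).min_const d).sub (LipschitzWith.const c)).max_const 0
  rw [add_zero] at h
  exact h

theorem abs_clamp_sub_clamp_le_abs_sub (b u v : ℝ) : |clamp b u - clamp b v| ≤ |u - v| := by
  simpa [Real.dist_eq] using (lipschitzWith_clamp b).dist_le_mul u v

theorem abs_clamp_le (hb : 0 ≤ b) (u : ℝ) : |clamp b u| ≤ b :=
  abs_le.2 ⟨le_max_left _ _, max_le (by linarith) (min_le_right _ _)⟩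

theorem clamp_eq_self {u : ℝ} (h : |u| ≤ b) : clamp b u = u := by
  rw [abs_le] at h
  rw [clamp, min_eq_left h.2, max_eq_right h.1]

theorem abs_sub_clamp_le (hc : 0 ≤ c) (u : ℝ) : |u - clamp c u| ≤ max (|u| - c) 0 := by
  rw [abs_le]
  constructor <;>
  · simp only [clamp, max_def, min_def]
    split_ifs <;> rcases abs_cases u with ⟨_, _⟩ | ⟨_, _⟩ <;> linarith

theorem abs_clamp_sub_clamp_le_tail (hc : 0 ≤ c) (hcb : c ≤ b) (u : ℝ) :
    |clamp b u - clamp c u| ≤ tail c b u := by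
  rw [abs_le]
  constructor <;>
  · simp only [clamp, tail, max_def, min_def]
    split_ifs <;> rcases abs_cases u with ⟨_, _⟩ | ⟨_, _⟩ <;> linarith

theorem abs_clamp_sub_clamp_le_tail_add_tail (hb : 0 ≤ b) (hc : 0 ≤ c) (u : ℝ) :
    |clamp b u - clamp c u| ≤ tail c b u + tail b c u := by
  rcases le_total c b with hcb | hbc
  · have : 0 ≤ tail b c u := le_max_right _ _
    linarith [abs_clamp_sub_clamp_le_tail hc hcb u]
  · have : 0 ≤ tail c b u := le_max_right _ _
    rw [abs_sub_comm]
    linarith [abs_clamp_sub_clamp_le_tail hb hbc u]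

/-- `clamp b` fixes the clamps `u, v` of `x, y` at level `b/2` and their sum, so by 1-Lipschitz
continuity every piece of the defect is controlled by `|x - u|` and `|y - v|`. -/
theorem abs_clamp_add_sub_le (hb : 0 ≤ b) (x y : ℝ) :
    |clamp b (x + y) - (clamp b x + clamp b y)| ≤
      2 * (max (|x| - b / 2) 0 + max (|y| - b / 2) 0) := by
  set u := clamp (b / 2) x
  set v := clamp (b / 2) y
  have hu : clamp b u = u := clamp_eq_self ((abs_clamp_le (by linarith) x).trans (by linarith))
  have hv : clamp b v = v := clamp_eq_self ((abs_clamp_le (by linarith) y).trans (by linarith))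
  have huv : clamp b (u + v) = u + v := clamp_eq_self <| (abs_add_le u v).trans <| by
    linarith [abs_clamp_le (b := b / 2) (by linarith) x, abs_clamp_le (b := b / 2) (by linarith) y]
  have hsum : |clamp b (x + y) - clamp b (u + v)| ≤ |x - u| + |y - v| :=
    (abs_clamp_sub_clamp_le_abs_sub b _ _).trans (by
      rw [show x + y - (u + v) = (x - u) + (y - v) by ring]; exact abs_add_le _ _)
  have hx := abs_clamp_sub_clamp_le_abs_sub b x u
  have hy := abs_clamp_sub_clamp_le_abs_sub b y v
  rw [hu] at hx
  rw [hv] at hy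
  rw [huv] at hsum
  calc |clamp b (x + y) - (clamp b x + clamp b y)|
      = |(clamp b (x + y) - (u + v)) - (clamp b x - u) - (clamp b y - v)| := by ring_nf
    _ ≤ 2 * (|x - u| + |y - v|) := by
      linarith [abs_sub (clamp b (x + y) - (u + v) - (clamp b x - u)) (clamp b y - v),
        abs_sub (clamp b (x + y) - (u + v)) (clamp b x - u)]
    _ ≤ 2 * (max (|x| - b / 2) 0 + max (|y| - b / 2) 0) := by
      gcongr
      exacts [abs_sub_clamp_le (by linarith) x, abs_sub_clamp_le (by linarith) y]

theorem abs_clamp_add_sub_le_tail (hb : 0 ≤ b) (x y : ℝ) :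
    |clamp b (x + y) - (clamp b x + clamp b y)| ≤
      2 * (tail (b / 2) (2 * b) x + tail (b / 2) (2 * b) y) := by
  have h₁ := abs_clamp_add_sub_le hb x y
  have h₂ : |clamp b (x + y) - (clamp b x + clamp b y)| ≤ 3 * b := by
    have := abs_clamp_le hb (x + y); have := abs_clamp_le hb x; have := abs_clamp_le hb y
    rw [abs_le] at *
    constructor <;> linarith
  simp only [tail, max_def, min_def] at h₁ ⊢
  split_ifs at h₁ ⊢ <;> linarith

end Clamp

theorem ClLip.of_lipschitzWith {n : ℕ} {φ : (Fin n → ℝ) → ℝ} {K : NNReal}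
    (hφ : LipschitzWith K φ) : ClLip φ := by
  refine ⟨K + 1, by positivity, 0, fun x y => ?_⟩
  have h := hφ.dist_le_mul x y
  rw [Real.dist_eq, dist_eq_norm] at h
  have : 0 ≤ ‖x - y‖ := norm_nonneg _
  simp only [pow_zero]
  nlinarith

namespace SLE

variable (S : SLE Ω) {X Y Z : Ω → ℝ}

theorem comp_mem_of_lipschitzWith (hX : X ∈ S.H) {φ : ℝ → ℝ} {K : NNReal}
    (hφ : LipschitzWith K φ) : (fun ω => φ (X ω)) ∈ S.H :=
  S.comp_mem 1 (fun v => φ (v 0)) (ClLip.of_lipschitzWith (hφ.comp (LipschitzWith.eval 0)))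
    (fun _ => X) (fun _ => hX)

theorem comp₂_mem_of_lipschitzWith (hX : X ∈ S.H) (hY : Y ∈ S.H) {φ : ℝ → ℝ → ℝ} {K : NNReal}
    (hφ : LipschitzWith K (Function.uncurry φ)) : (fun ω => φ (X ω) (Y ω)) ∈ S.H := by
  simpa using S.comp_mem 2 (fun v => φ (v 0) (v 1))
    (ClLip.of_lipschitzWith (hφ.comp ((LipschitzWith.eval (α := fun _ : Fin 2 => ℝ) 0).prodMk
      (LipschitzWith.eval 1))))
    ![X, Y] (fun i => by fin_cases i <;> simp [hX, hY])

theorem add_mem (hX : X ∈ S.H) (hY : Y ∈ S.H) : (fun ω => X ω + Y ω) ∈ S.H :=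
  S.comp₂_mem_of_lipschitzWith hX hY (LipschitzWith.prod_fst.add LipschitzWith.prod_snd)

theorem trunc_mem (hX : X ∈ S.H) (c : ℝ) : trunc c X ∈ S.H :=
  S.comp_mem_of_lipschitzWith hX (lipschitzWith_clamp c)

theorem E_const_add (hZ : Z ∈ S.H) (c : ℝ) : S.E (fun ω => c + Z ω) = c + S.E Z := by
  apply le_antisymm
  · simpa [S.isConst] using S.subadd (fun _ => c) Z (S.const_mem c) hZ
  · have h := S.subadd (fun ω => c + Z ω) (fun _ => -c)
      (S.add_mem (S.const_mem c) hZ) (S.const_mem (-c))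
    simp only [add_neg_cancel_comm, S.isConst] at h
    linarith

theorem E_add_const (hZ : Z ∈ S.H) (c : ℝ) : S.E (fun ω => Z ω + c) = S.E Z + c := by
  simpa only [add_comm] using S.E_const_add hZ c

theorem abs_E_sub_E_le (hX : X ∈ S.H) (hY : Y ∈ S.H) (hZ : Z ∈ S.H)
    (h : ∀ ω, |X ω - Y ω| ≤ Z ω) : |S.E X - S.E Y| ≤ S.E Z := by
  have hle {A B : Ω → ℝ} (hA : A ∈ S.H) (hB : B ∈ S.H) (hAB : ∀ ω, A ω ≤ B ω + Z ω) :
      S.E A ≤ S.E B + S.E Z :=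
    (S.mono A _ hA (S.add_mem hB hZ) hAB).trans (S.subadd B Z hB hZ)
  rw [abs_le]
  constructor
  · linarith [hle hY hX fun ω => by linarith [(abs_le.1 (h ω)).1]]
  · linarith [hle hX hY fun ω => by linarith [(abs_le.1 (h ω)).2]]

theorem E_add_of_indepPair (hX : X ∈ S.H) (hY : Y ∈ S.H) (hind : IndepPair S X Y)
    {f g : ℝ → ℝ} {Kf Kg : NNReal} (hf : LipschitzWith Kf f) (hg : LipschitzWith Kg g)
    {Mf Mg : ℝ} (hfM : ∀ x, |f x| ≤ Mf) (hgM : ∀ y, |g y| ≤ Mg) :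
    S.E (fun ω => f (X ω) + g (Y ω)) = S.E (fun ω => f (X ω)) + S.E (fun ω => g (Y ω)) := by
  have hfg := (hf.comp LipschitzWith.prod_fst).add (hg.comp LipschitzWith.prod_snd)
  have hbound : ∀ x y, |f x + g y| ≤ Mf + Mg :=
    fun x y => (abs_add_le _ _).trans (add_le_add (hfM x) (hgM y))
  rw [hind _ ⟨_, hfg⟩ ⟨_, hbound⟩]
  simp only [S.E_const_add (S.comp_mem_of_lipschitzWith hY hg)]
  exact S.E_add_const (S.comp_mem_of_lipschitzWith hX hf) _

end SLE

section H1

variable {S : SLE Ω} {X Y : Ω → ℝ}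

theorem memH1.tendsto_E_tail (hX : memH1 S X) :
    Tendsto (fun cd : ℝ × ℝ => S.E (fun ω => tail cd.1 cd.2 (X ω))) (atTop ×ˢ atTop) (nhds 0) :=
  hX.2

theorem exists_tendsto_E_trunc (hX : memH1 S X) :
    ∃ L, Tendsto (fun c : ℝ => S.E (trunc c X)) atTop (nhds L) := by
  refine cauchySeq_tendsto_of_complete (cauchySeq_iff_tendsto_dist_atTop_0.2 ?_)
  have htail : ∀ c d, (fun ω => tail c d (X ω)) ∈ S.H :=
    fun c d => S.comp_mem_of_lipschitzWith hX.1 (lipschitzWith_tail c d)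
  have hlim : Tendsto (fun p : ℝ × ℝ => S.E (fun ω => tail p.2 p.1 (X ω)) +
      S.E (fun ω => tail p.1 p.2 (X ω))) atTop (nhds 0) := by
    rw [← prod_atTop_atTop_eq]
    simpa using (hX.tendsto_E_tail.comp (tendsto_snd.prodMk tendsto_fst)).add hX.tendsto_E_tail
  refine squeeze_zero' (Eventually.of_forall fun _ => dist_nonneg) ?_ hlim
  filter_upwards [eventually_ge_atTop (0, 0)] with p ⟨hp₁, hp₂⟩
  rw [Real.dist_eq]
  refine (S.abs_E_sub_E_le (S.trunc_mem hX.1 _) (S.trunc_mem hX.1 _)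
    (S.add_mem (htail _ _) (htail _ _))
    fun ω => abs_clamp_sub_clamp_le_tail_add_tail hp₁ hp₂ (X ω)).trans ?_
  exact S.subadd _ _ (htail _ _) (htail _ _)

theorem tendsto_E_trunc_add_sub (hX : memH1 S X) (hY : memH1 S Y) (hind : IndepPair S X Y) :
    Tendsto (fun b : ℝ => S.E (trunc b (fun ω => X ω + Y ω)) -
      (S.E (trunc b X) + S.E (trunc b Y))) atTop (nhds 0) := by
  set D : (Ω → ℝ) → ℝ → Ω → ℝ := fun Z b ω => tail (b / 2) (2 * b) (Z ω)
  have hD : ∀ {Z}, memH1 S Z → ∀ b, D Z b ∈ S.H :=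
    fun hZ b => S.comp_mem_of_lipschitzWith hZ.1 (lipschitzWith_tail _ _)
  have hlim : Tendsto (fun b => 2 * (S.E (D X b) + S.E (D Y b))) atTop (nhds 0) := by
    have hpair : Tendsto (fun b : ℝ => (b / 2, 2 * b)) atTop (atTop ×ˢ atTop) :=
      (tendsto_id.atTop_div_const two_pos).prodMk (tendsto_id.const_mul_atTop two_pos)
    simpa using ((hX.tendsto_E_tail.comp hpair).add (hY.tendsto_E_tail.comp hpair)).const_mul 2
  refine squeeze_zero_norm' ?_ hlim
  filter_upwards [eventually_ge_atTop 0] with b hb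
  have hclamp_bdd : ∀ u, |clamp b u| ≤ b := abs_clamp_le hb
  have hsplit : S.E (trunc b X) + S.E (trunc b Y) = S.E (fun ω => trunc b X ω + trunc b Y ω) :=
    (S.E_add_of_indepPair hX.1 hY.1 hind (lipschitzWith_clamp b) (lipschitzWith_clamp b)
      hclamp_bdd hclamp_bdd).symm
  rw [Real.norm_eq_abs, hsplit]
  calc _ ≤ S.E (fun ω => 2 * (D X b ω + D Y b ω)) :=
        S.abs_E_sub_E_le (S.trunc_mem (S.add_mem hX.1 hY.1) b)
          (S.add_mem (S.trunc_mem hX.1 b) (S.trunc_mem hY.1 b))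
          (S.comp_mem_of_lipschitzWith (S.add_mem (hD hX b) (hD hY b))
            (lipschitzWith_smul (2 : ℝ)))
          fun ω => abs_clamp_add_sub_le_tail hb (X ω) (Y ω)
    _ ≤ 2 * (S.E (D X b) + S.E (D Y b)) := by
      rw [S.poshom 2 two_pos _ (S.add_mem (hD hX b) (hD hY b))]
      gcongr
      exact S.subadd _ _ (hD hX b) (hD hY b)

end H1

/-- Lemma 3.7: additivity of the extended expectation over independent summands. -/
theorem breve_add_of_indep (S : SLE Ω) (X Y : Ω → ℝ)
    (hX : memH1 S X) (hY : memH1 S Y) (hind : IndepPair S X Y) :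
    ∃ eX eY eXY : ℝ,
      Tendsto (fun c : ℝ => S.E (trunc c X)) atTop (nhds eX) ∧
      Tendsto (fun c : ℝ => S.E (trunc c Y)) atTop (nhds eY) ∧
      Tendsto (fun c : ℝ => S.E (trunc c (fun ω => X ω + Y ω))) atTop (nhds eXY) ∧
      eXY = eX + eY := by
  obtain ⟨eX, hX_lim⟩ := exists_tendsto_E_trunc hX
  obtain ⟨eY, hY_lim⟩ := exists_tendsto_E_trunc hY
  refine ⟨eX, eY, eX + eY, hX_lim, hY_lim, ?_, rfl⟩
  simpa using (tendsto_E_trunc_add_sub hX hY hind).add (hX_lim.add hY_lim)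

end
end

section
/- For any real numbers $X$, $Y$, and $b > 0$, with the truncation $z^{(b)} := (-b) \vee z \wedge b$, one has $\big|(X+Y)^{(b)} - (X^{(b)} + Y^{(b)})\big| \le 2\big((|X| - b/2)^+ + (|Y| - b/2)^+\big) \wedge (3b)$. -/
/-!
Write `T z = (-b) ∨ z ∧ b`. The error `T(X+Y) - (TX + TY)` is a signed sum of the three truncation
errors `T z - z`, each bounded by `(|z| - b)⁺`; since `|X + Y| - b ≤ (|X| - b/2) + (|Y| - b/2)`,
these add up to at most `2((|X| - b/2)⁺ + (|Y| - b/2)⁺)`. The bound `3b` holds because each of the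
three truncated values has absolute value at most `b`.
-/

lemma abs_max_neg_min_sub_le (z b : ℝ) : |max (-b) (min z b) - z| ≤ max (|z| - b) 0 := by
  grind

lemma abs_max_neg_min_le {b : ℝ} (hb : 0 ≤ b) (z : ℝ) : |max (-b) (min z b)| ≤ b :=
  abs_le.2 ⟨le_max_left _ _, max_le (by linarith) (min_le_right _ _)⟩

lemma abs_sub_add_le (a b c : ℝ) : |a - (b + c)| ≤ |a| + |b| + |c| :=
  (abs_sub _ _).trans (by linarith [abs_add_le b c])

lemma abs_sub_add_le_of_approx (a b c x y : ℝ) :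
    |a - (b + c)| ≤ |a - (x + y)| + |b - x| + |c - y| := by
  have h : a - (b + c) = (a - (x + y)) - ((b - x) + (c - y)) := by ring
  rw [h]
  exact abs_sub_add_le _ _ _

lemma max_abs_add_sub_le (X Y b : ℝ) :
    max (|X + Y| - b) 0 ≤ max (|X| - b / 2) 0 + max (|Y| - b / 2) 0 :=
  max_le (by linarith [abs_add_le X Y, le_max_left (|X| - b / 2) 0, le_max_left (|Y| - b / 2) 0])
    (add_nonneg (le_max_right _ _) (le_max_right _ _))

theorem truncation_sum_inequality (X Y b : ℝ) (hb : 0 < b) :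
    |max (-b) (min (X + Y) b) - (max (-b) (min X b) + max (-b) (min Y b))| ≤
      min (2 * (max (|X| - b / 2) 0 + max (|Y| - b / 2) 0)) (3 * b) := by
  refine le_min ?_ ?_
  · have hX : max (|X| - b) 0 ≤ max (|X| - b / 2) 0 := max_le_max_right 0 (by linarith)
    have hY : max (|Y| - b) 0 ≤ max (|Y| - b / 2) 0 := max_le_max_right 0 (by linarith)
    calc _ ≤ |max (-b) (min (X + Y) b) - (X + Y)| + |max (-b) (min X b) - X|
          + |max (-b) (min Y b) - Y| := abs_sub_add_le_of_approx _ _ _ _ _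
      _ ≤ max (|X + Y| - b) 0 + max (|X| - b) 0 + max (|Y| - b) 0 := by
          gcongr <;> exact abs_max_neg_min_sub_le _ _
      _ ≤ _ := by linarith [max_abs_add_sub_le X Y b]
  · calc _ ≤ |max (-b) (min (X + Y) b)| + |max (-b) (min X b)| + |max (-b) (min Y b)| :=
          abs_sub_add_le _ _ _
      _ ≤ b + b + b := by gcongr <;> exact abs_max_neg_min_le hb.le _
      _ = 3 * b := by ring
end
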